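/- Let G be a countable discrete group, Σ = (σ_n : G → Sym(V_n)) a sofic approximation to G, A and B finite sets, μ a G-process on A^G, and (μ_n) a sequence of probability measures on A^{V_n} that locally weak* converges to μ over Σ. Let F ⊆ G be finite, let θ, κ : A^F → B, and let φ = θ ∘ π_F and ψ = κ ∘ π_F be the corresponding F-local observables A^G → B. Let c > 0 and let S_n ⊆ V_n be sets with |S_n| ≥ c·|V_n| for all n. Then for every ε > 0, for all sufficiently large n: (1/|S_n|)·| H(π_{S_n*}(φ^{σ_n})_* μ_n) − H(π_{S_n*}(ψ^{σ_n})_* μ_n) | ≤ d^Rok_μ(φ,ψ) + ε, where π_{S_n} : B^{V_n} → B^{S_n} is coordinate projection. -/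

import Mathlib

open MeasureTheory Filter

/-- Shannon entropy of a measure on a finite set, with the convention `0 * log 0 = 0`. -/
noncomputable def shannonEntropy {D : Type*} [Fintype D] [MeasurableSpace D]
    (η : Measure D) : ℝ :=
  -∑ d : D, (η {d}).toReal * Real.log (η {d}).toReal

/-- Shannon entropy `H_μ(α)` of a finite-valued observable: the entropy of the
pushforward measure `α_* μ`. -/
noncomputable def obsEntropy {X D : Type*} [MeasurableSpace X] [Fintype D] [MeasurableSpace D]
    (μ : Measure X) (α : X → D) : ℝ :=
  shannonEntropy (Measure.map α μ)

/-- Conditional Shannon entropy `H_μ(α | β) = H_μ((α,β)) - H_μ(β)`. -/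
noncomputable def condEntropyObs {X D E : Type*} [MeasurableSpace X]
    [Fintype D] [MeasurableSpace D] [Fintype E] [MeasurableSpace E]
    (μ : Measure X) (α : X → D) (β : X → E) : ℝ :=
  obsEntropy μ (fun x => (α x, β x)) - obsEntropy μ β

/-- The Rokhlin distance `d^Rok_μ(α, β) = H_μ(α|β) + H_μ(β|α)`. -/
noncomputable def rokDist {X D E : Type*} [MeasurableSpace X]
    [Fintype D] [MeasurableSpace D] [Fintype E] [MeasurableSpace E]
    (μ : Measure X) (α : X → D) (β : X → E) : ℝ :=
  condEntropyObs μ α β + condEntropyObs μ β α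

/-- `σ = (σ_n : G → Sym(V_n))` is a sofic approximation to `G`. -/
def IsSoficApprox {G : Type*} [Group G] {V : ℕ → Type*} [∀ n, Fintype (V n)]
    (σ : ∀ n, G → Equiv.Perm (V n)) : Prop :=
  Tendsto (fun n => Fintype.card (V n)) atTop atTop ∧
    (∀ g h : G,
      Tendsto (fun n =>
          (Nat.card {v : V n // σ n g (σ n h v) = σ n (g * h) v} : ℝ) /
            (Fintype.card (V n) : ℝ)) atTop (nhds 1)) ∧
    (∀ g : G, g ≠ 1 →
      Tendsto (fun n =>
          (Nat.card {v : V n // σ n g v = v} : ℝ) / (Fintype.card (V n) : ℝ))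
        atTop (nhds 0))

/-- Total variation distance between two measures on a finite set. -/
noncomputable def tvDist {D : Type*} [Fintype D] [MeasurableSpace D]
    (η₁ η₂ : Measure D) : ℝ :=
  (∑ d : D, |(η₁ {d}).toReal - (η₂ {d}).toReal|) / 2

/-- The sequence of measures `μn n` on `V n → A` locally weak* converges over the sofic
approximation `σ` to the measure `μ` on `A^G`: for every finite `F ⊆ G` and `δ > 0`,
eventually at least `(1-δ)|V_n|` of the `v ∈ V_n` satisfy
`‖(Π^{σ_n}_{v,F})_* μ_n − μ_F‖_TV < δ`. -/
def LocalWeakStarConverges {G : Type*} [Group G] [DecidableEq G] {V : ℕ → Type*}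
    [∀ n, Fintype (V n)] {A : Type*} [Fintype A] [MeasurableSpace A]
    (σ : ∀ n, G → Equiv.Perm (V n)) (μn : ∀ n, Measure (V n → A))
    (μ : Measure (G → A)) : Prop :=
  ∀ (F : Finset G) (δ : ℝ), 0 < δ → ∀ᶠ n in atTop,
    ((1 - δ) * (Fintype.card (V n) : ℝ)) ≤
      (Nat.card {v : V n //
        tvDist (Measure.map (fun (x : V n → A) (g : ↥F) => x (σ n g.1 v)) (μn n))
          (Measure.map (fun (a : G → A) (g : ↥F) => a g.1) μ) < δ} : ℝ)

/-!
Subadditivity of conditional entropy over the coordinates in `S_n` gives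
`H(φ^σ|_S) ≤ H(ψ^σ|_S) + ∑_{v ∈ S} H_{μ_n}(φ_v | ψ_v)`, where `φ_v, ψ_v` read `θ, κ` off the
pattern `Π_{v,F}`. Each summand is the conditional entropy `H(θ | κ)` under the pattern law
`(Π_{v,F})_* μ_n`. Where that law is TV-close to `μ_F`, uniform continuity of entropy bounds the
summand by `H_μ(φ | ψ) + ε/2`; at the at most `δ |V_n|` other vertices it is at most `log |B|²`,
which costs at most `ε |S_n| / 2` in total because `|S_n| ≥ c |V_n|`. Exchanging `θ` and `κ`
bounds the difference of the two entropies by `|S_n| (d^Rok_μ(φ, ψ) + ε)`.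
-/

open scoped Finset

namespace Real

theorem negMulLog_sum_le {ι : Type*} (s : Finset ι) {a : ι → ℝ} (ha : ∀ i ∈ s, 0 ≤ a i) :
    negMulLog (∑ i ∈ s, a i) ≤ ∑ i ∈ s, negMulLog (a i) := by
  have hterm : ∀ i ∈ s, -a i * log (∑ j ∈ s, a j) ≤ negMulLog (a i) := by
    intro i hi
    rcases (ha i hi).eq_or_lt with h | h
    · simp [← h]
    · have := log_le_log h (Finset.single_le_sum ha hi)
      rw [negMulLog]
      nlinarith
  calc negMulLog (∑ i ∈ s, a i) = ∑ i ∈ s, -a i * log (∑ j ∈ s, a j) := by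
        rw [negMulLog, ← Finset.sum_neg_distrib, ← Finset.sum_mul]
    _ ≤ ∑ i ∈ s, negMulLog (a i) := Finset.sum_le_sum hterm

/-- The log-sum inequality. -/
theorem sum_mul_log_div_le {ι : Type*} (s : Finset ι) {a b : ι → ℝ} (ha : ∀ i ∈ s, 0 ≤ a i)
    (hb : ∀ i ∈ s, 0 ≤ b i) (hab : ∀ i ∈ s, b i = 0 → a i = 0) :
    ∑ i ∈ s, a i * log (b i / a i) ≤
      (∑ i ∈ s, a i) * log ((∑ i ∈ s, b i) / ∑ i ∈ s, a i) := by
  set A := ∑ i ∈ s, a i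
  set B := ∑ i ∈ s, b i
  obtain hA | hA : 0 = A ∨ 0 < A := (Finset.sum_nonneg ha).eq_or_lt
  · have hzero : ∀ i ∈ s, a i = 0 := (Finset.sum_eq_zero_iff_of_nonneg ha).mp hA.symm
    rw [← hA, zero_mul]
    exact (Finset.sum_eq_zero fun i hi => by rw [hzero i hi, zero_mul]).le
  have hB : 0 < B := by
    refine (Finset.sum_nonneg hb).lt_of_ne fun hB => hA.ne' ?_
    have hbzero := (Finset.sum_eq_zero_iff_of_nonneg hb).mp hB.symm
    exact Finset.sum_eq_zero fun i hi => hab i hi (hbzero i hi)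
  -- termwise, `log y ≤ y - 1` at `y = bᵢ A / (aᵢ B)`
  have hterm : ∀ i ∈ s, a i * log (b i / a i) ≤ b i * A / B - a i + a i * log (B / A) := by
    intro i hi
    rcases (ha i hi).eq_or_lt with hai | hai
    · rw [← hai]
      simpa using div_nonneg (mul_nonneg (hb i hi) hA.le) hB.le
    have hbi : 0 < b i := (hb i hi).lt_of_ne fun h => hai.ne' (hab i hi h.symm)
    have hA' : A ≠ 0 := hA.ne'
    have hsplit : log (b i / a i) = log (b i * A / (a i * B)) + log (B / A) := by
      rw [← log_mul (by positivity) (by positivity)]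
      congr 1
      field_simp
    have hlog := log_le_sub_one_of_pos (show 0 < b i * A / (a i * B) by positivity)
    have hcancel : a i * (b i * A / (a i * B) - 1) = b i * A / B - a i := by field_simp
    rw [hsplit, mul_add]
    nlinarith [mul_le_mul_of_nonneg_left hlog hai.le]
  calc ∑ i ∈ s, a i * log (b i / a i)
      ≤ ∑ i ∈ s, (b i * A / B - a i + a i * log (B / A)) := Finset.sum_le_sum hterm
    _ = B * A / B - A + A * log (B / A) := by
        rw [Finset.sum_add_distrib, Finset.sum_sub_distrib, ← Finset.sum_mul, ← Finset.sum_div,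
          ← Finset.sum_mul]
    _ = A * log (B / A) := by field_simp; ring

end Real

section ShannonEntropy

variable {D E E' : Type*} [Fintype D] [MeasurableSpace D] [MeasurableSpace E] [MeasurableSpace E']

theorem shannonEntropy_eq_sum_negMulLog (η : Measure D) :
    shannonEntropy η = ∑ d, Real.negMulLog (η.real {d}) := by
  rw [shannonEntropy, ← Finset.sum_neg_distrib]
  exact Finset.sum_congr rfl fun d _ => by rw [Real.negMulLog, neg_mul]; rfl

theorem shannonEntropy_nonneg (η : Measure D) [IsProbabilityMeasure η] :
    0 ≤ shannonEntropy η := by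
  rw [shannonEntropy_eq_sum_negMulLog]
  exact Finset.sum_nonneg fun d _ => Real.negMulLog_nonneg measureReal_nonneg measureReal_le_one

variable [MeasurableSingletonClass D] [MeasurableSingletonClass E]

theorem measureReal_map_singleton [DecidableEq E] (u : D → E) (η : Measure D) [IsFiniteMeasure η]
    (e : E) : (η.map u).real {e} = ∑ d with u d = e, η.real {d} := by
  rw [map_measureReal_apply (measurable_of_finite u) (measurableSet_singleton e),
    sum_measureReal_singleton]
  congr 1
  ext d
  simp

variable [Fintype E] [Fintype E'] [MeasurableSingletonClass E']

theorem sum_measureReal_singleton_prodMk (η : Measure (D × E)) [IsFiniteMeasure η] (e : E) :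
    ∑ d, η.real {(d, e)} = (η.map Prod.snd).real {e} := by
  classical
  rw [measureReal_map_singleton, Finset.sum_filter, Fintype.sum_prod_type_right,
    Fintype.sum_eq_single e fun e' he' => by simp [he']]
  simp

theorem shannonEntropy_le_log_card (η : Measure D) [IsProbabilityMeasure η] :
    shannonEntropy η ≤ Real.log (Fintype.card D) := by
  have h := Real.sum_mul_log_div_le Finset.univ (a := fun d => η.real {d}) (b := fun _ => 1)
    (fun _ _ => measureReal_nonneg) (fun _ _ => zero_le_one) (fun _ _ h => absurd h one_ne_zero)
  simp only [sum_measureReal_singleton, Finset.coe_univ, probReal_univ, one_mul,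
    Finset.sum_const, Finset.card_univ, nsmul_eq_mul, mul_one, div_one, one_div,
    Real.log_inv, mul_neg] at h
  rw [shannonEntropy_eq_sum_negMulLog]
  simpa [Real.negMulLog] using h

theorem shannonEntropy_map_le (u : D → E) (η : Measure D) [IsFiniteMeasure η] :
    shannonEntropy (η.map u) ≤ shannonEntropy η := by
  classical
  simp only [shannonEntropy_eq_sum_negMulLog, measureReal_map_singleton]
  calc ∑ e, Real.negMulLog (∑ d with u d = e, η.real {d})
      ≤ ∑ e, ∑ d with u d = e, Real.negMulLog (η.real {d}) :=
        Finset.sum_le_sum fun e _ => Real.negMulLog_sum_le _ fun _ _ => measureReal_nonneg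
    _ = ∑ d, Real.negMulLog (η.real {d}) := Finset.sum_fiberwise _ u _

theorem shannonEntropy_sub_shannonEntropy_map (u : D → E) (η : Measure D) [IsFiniteMeasure η] :
    shannonEntropy η - shannonEntropy (η.map u) =
      ∑ d, η.real {d} * Real.log ((η.map u).real {u d} / η.real {d}) := by
  classical
  have hterm : ∀ d, η.real {d} * Real.log ((η.map u).real {u d} / η.real {d}) =
      η.real {d} * Real.log ((η.map u).real {u d}) + Real.negMulLog (η.real {d}) := by
    intro d
    rcases (measureReal_nonneg : 0 ≤ η.real {d}).eq_or_lt with h | h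
    · simp [← h]
    have hle : η.real {d} ≤ (η.map u).real {u d} := by
      rw [measureReal_map_singleton]
      exact Finset.single_le_sum (fun _ _ => measureReal_nonneg) (by simp)
    rw [Real.log_div (h.trans_le hle).ne' h.ne', Real.negMulLog]
    ring
  have hfiber : ∑ d, η.real {d} * Real.log ((η.map u).real {u d}) =
      -∑ e, Real.negMulLog ((η.map u).real {e}) := by
    rw [← Finset.sum_fiberwise Finset.univ u, ← Finset.sum_neg_distrib]
    refine Finset.sum_congr rfl fun e _ => ?_
    rw [Finset.sum_congr rfl fun d hd => by rw [(Finset.mem_filter.mp hd).2],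
      ← Finset.sum_mul, ← measureReal_map_singleton u η e, Real.negMulLog, neg_mul, neg_neg]
  rw [Finset.sum_congr rfl fun d _ => hterm d, Finset.sum_add_distrib, hfiber,
    shannonEntropy_eq_sum_negMulLog, shannonEntropy_eq_sum_negMulLog]
  ring

/-- Data processing `H(X | Y) ≤ H(X | u Y)`, stated for the joint law `η` of `(X, Y)`. -/
theorem shannonEntropy_sub_map_snd_le (u : E → E') (η : Measure (D × E)) [IsFiniteMeasure η] :
    shannonEntropy η - shannonEntropy (η.map Prod.snd) ≤
      shannonEntropy (η.map fun z => (z.1, u z.2)) - shannonEntropy (η.map fun z => u z.2) := by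
  classical
  set w : D × E → D × E' := fun z => (z.1, u z.2)
  set ζ := η.map w
  have hζ_snd : ζ.map Prod.snd = η.map fun z => u z.2 :=
    Measure.map_map (measurable_of_finite _) (measurable_of_finite _)
  have hηu : (η.map Prod.snd).map u = η.map fun z => u z.2 :=
    Measure.map_map (measurable_of_finite _) (measurable_of_finite _)
  have hle : ∀ z, η.real {z} ≤ ζ.real {w z} := fun z => by
    rw [map_measureReal_apply (measurable_of_finite w) (measurableSet_singleton _)]
    exact measureReal_mono fun z' hz' => by simp [Set.mem_singleton_iff.mp hz']
  -- log-sum over each fibre `{(d, e) | d : D}`, whose masses add up to `(η.map snd).real {e}`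
  have hfiber : ∀ e, ∑ d, η.real {(d, e)} * Real.log (ζ.real {w (d, e)} / η.real {(d, e)}) ≤
      (η.map Prod.snd).real {e} *
        Real.log ((η.map fun z => u z.2).real {u e} / (η.map Prod.snd).real {e}) := by
    intro e
    rw [← sum_measureReal_singleton_prodMk, ← hζ_snd, ← sum_measureReal_singleton_prodMk]
    exact Real.sum_mul_log_div_le _ (fun _ _ => measureReal_nonneg)
      (fun _ _ => measureReal_nonneg) fun d _ h => le_antisymm (h ▸ hle (d, e)) measureReal_nonneg
  have hη := shannonEntropy_sub_shannonEntropy_map w η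
  have hsnd := shannonEntropy_sub_shannonEntropy_map u (η.map Prod.snd)
  rw [hηu] at hsnd
  rw [Fintype.sum_prod_type_right] at hη
  linarith [Finset.sum_le_sum fun e (_ : e ∈ Finset.univ) => hfiber e]

end ShannonEntropy

section Observables

variable {X : Type*} [MeasurableSpace X] (μ : Measure X)
  {D E E' : Type*} [Fintype D] [MeasurableSpace D] [Fintype E] [MeasurableSpace E]
  [Fintype E'] [MeasurableSpace E']

theorem obsEntropy_nonneg [IsProbabilityMeasure μ] {α : X → D} (hα : Measurable α) :
    0 ≤ obsEntropy μ α :=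
  have := Measure.isProbabilityMeasure_map hα.aemeasurable (μ := μ)
  shannonEntropy_nonneg _

variable [MeasurableSingletonClass D]

theorem obsEntropy_map {π : X → D} (hπ : Measurable π) (u : D → E) :
    obsEntropy (μ.map π) u = obsEntropy μ (u ∘ π) := by
  rw [obsEntropy, obsEntropy, Measure.map_map (measurable_of_finite u) hπ]

theorem condEntropyObs_map {π : X → D} (hπ : Measurable π) (α : D → E) (β : D → E') :
    condEntropyObs (μ.map π) α β = condEntropyObs μ (α ∘ π) (β ∘ π) := by
  rw [condEntropyObs, condEntropyObs, obsEntropy_map μ hπ, obsEntropy_map μ hπ]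
  rfl

variable [MeasurableSingletonClass E] [MeasurableSingletonClass E']

theorem obsEntropy_le_log_card [IsProbabilityMeasure μ] {α : X → D} (hα : Measurable α) :
    obsEntropy μ α ≤ Real.log (Fintype.card D) :=
  have := Measure.isProbabilityMeasure_map hα.aemeasurable (μ := μ)
  shannonEntropy_le_log_card _

theorem condEntropyObs_le_log_card [IsProbabilityMeasure μ] {α : X → D} {β : X → E}
    (hα : Measurable α) (hβ : Measurable β) :
    condEntropyObs μ α β ≤ Real.log (Fintype.card (D × E)) := by
  have := obsEntropy_le_log_card μ (hα.prodMk hβ)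
  have := obsEntropy_nonneg μ hβ
  rw [condEntropyObs]
  linarith

variable [IsFiniteMeasure μ]

theorem obsEntropy_comp_le {α : X → D} (hα : Measurable α) (u : D → E) :
    obsEntropy μ (u ∘ α) ≤ obsEntropy μ α := by
  rw [← obsEntropy_map μ hα]
  exact shannonEntropy_map_le u _

theorem obsEntropy_congr_of_comp {α : X → D} {β : X → E} (hα : Measurable α) (hβ : Measurable β)
    (u : D → E) (v : E → D) (hu : u ∘ α = β) (hv : v ∘ β = α) :
    obsEntropy μ α = obsEntropy μ β :=
  (hv ▸ obsEntropy_comp_le μ hβ v).antisymm (hu ▸ obsEntropy_comp_le μ hα u)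

theorem condEntropyObs_nonneg {α : X → D} {β : X → E} (hα : Measurable α) (hβ : Measurable β) :
    0 ≤ condEntropyObs μ α β :=
  sub_nonneg.mpr (obsEntropy_comp_le μ (hα.prodMk hβ) Prod.snd)

theorem condEntropyObs_le_condEntropyObs_comp {α : X → D} {β : X → E} (hα : Measurable α)
    (hβ : Measurable β) (u : E → E') :
    condEntropyObs μ α β ≤ condEntropyObs μ α (u ∘ β) := by
  have h := shannonEntropy_sub_map_snd_le u (μ.map fun x => (α x, β x))
  simp only [Measure.map_map (measurable_of_finite _) (hα.prodMk hβ)] at h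
  exact h

end Observables

section Families

variable {X : Type*} [MeasurableSpace X] (μ : Measure X) [IsFiniteMeasure μ]
  {D E : Type*} [Fintype D] [MeasurableSpace D] [MeasurableSingletonClass D]
  [Fintype E] [MeasurableSpace E] [MeasurableSingletonClass E]
  {ι : Type*} [DecidableEq ι]

theorem condEntropyObs_pi_le_sum {f : ι → X → D} (hf : ∀ i, Measurable (f i)) {β : X → E}
    (hβ : Measurable β) (T : Finset ι) :
    condEntropyObs μ (fun x (i : T) => f i x) β ≤ ∑ i ∈ T, condEntropyObs μ (f i) β := by
  induction T using Finset.induction_on with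
  | empty =>
    have hpair : Measurable fun x => (fun i : (∅ : Finset ι) => f i x, β x) :=
      (measurable_pi_lambda (fun x (i : (∅ : Finset ι)) => f i x) fun i => hf i).prodMk hβ
    have h : obsEntropy μ (fun x => (fun i : (∅ : Finset ι) => f i x, β x)) = obsEntropy μ β :=
      obsEntropy_congr_of_comp μ hpair hβ Prod.snd
        (fun e => (fun i => (Finset.notMem_empty _ i.2).elim, e)) rfl
        (funext fun x => Prod.ext (funext fun i => (Finset.notMem_empty _ i.2).elim) rfl)
    rw [condEntropyObs, h, sub_self, Finset.sum_empty]
  | @insert a T ha ih =>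
    have hfT : Measurable fun x (i : T) => f i x := measurable_pi_lambda _ fun i => hf i
    have hfaT : Measurable fun x (i : (insert a T : Finset ι)) => f i x :=
      measurable_pi_lambda _ fun i => hf i
    have hsplit : obsEntropy μ (fun x => (fun i : (insert a T : Finset ι) => f i x, β x)) =
        obsEntropy μ (fun x => (f a x, (fun i : T => f i x, β x))) :=
      obsEntropy_congr_of_comp μ (hfaT.prodMk hβ) ((hf a).prodMk (hfT.prodMk hβ))
        (fun z => (z.1 ⟨a, Finset.mem_insert_self a T⟩,
          (fun i : T => z.1 ⟨i, Finset.mem_insert_of_mem i.2⟩, z.2)))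
        (fun w => (fun i => if h : i.1 = a then w.1 else
          w.2.1 ⟨i, Finset.mem_of_mem_insert_of_ne i.2 h⟩, w.2.2)) rfl
        (funext fun x => Prod.ext (funext fun i => by by_cases h : i.1 = a <;> simp [h]) rfl)
    have hstep : condEntropyObs μ (f a) (fun x => (fun i : T => f i x, β x)) ≤
        condEntropyObs μ (f a) β :=
      condEntropyObs_le_condEntropyObs_comp μ (hf a) (hfT.prodMk hβ) Prod.snd
    rw [Finset.sum_insert ha]
    simp only [condEntropyObs] at hstep ih ⊢
    linarith

theorem obsEntropy_pi_le_add_sum_condEntropyObs {f k : ι → X → D} (hf : ∀ i, Measurable (f i))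
    (hk : ∀ i, Measurable (k i)) (T : Finset ι) :
    obsEntropy μ (fun x (i : T) => f i x) ≤
      obsEntropy μ (fun x (i : T) => k i x) + ∑ i ∈ T, condEntropyObs μ (f i) (k i) := by
  have hfT : Measurable fun x (i : T) => f i x := measurable_pi_lambda _ fun i => hf i
  have hkT : Measurable fun x (i : T) => k i x := measurable_pi_lambda _ fun i => hk i
  have hjoint := obsEntropy_comp_le μ (hfT.prodMk hkT) Prod.fst
  have hsub := condEntropyObs_pi_le_sum μ hf hkT T
  have hcoarsen : ∑ i ∈ T, condEntropyObs μ (f i) (fun x (j : T) => k j x) ≤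
      ∑ i ∈ T, condEntropyObs μ (f i) (k i) :=
    Finset.sum_le_sum fun i hi =>
      condEntropyObs_le_condEntropyObs_comp μ (hf i) hkT fun y : T → D => y ⟨i, hi⟩
  rw [condEntropyObs] at hsub
  exact hjoint.trans (by linarith)

end Families

section Continuity

variable {D E E' : Type*} [Fintype D] [MeasurableSpace D] [Fintype E] [MeasurableSpace E]
  [Fintype E'] [MeasurableSpace E']

theorem dist_measureReal_singleton_le_two_mul_tvDist (η₁ η₂ : Measure D) :
    dist (fun d => η₁.real {d}) (fun d => η₂.real {d}) ≤ 2 * tvDist η₁ η₂ := by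
  have hsum : ∀ d, |η₁.real {d} - η₂.real {d}| ≤ ∑ d', |η₁.real {d'} - η₂.real {d'}| :=
    fun d => Finset.single_le_sum (f := fun d' => |η₁.real {d'} - η₂.real {d'}|)
      (fun _ _ => abs_nonneg _) (Finset.mem_univ d)
  have htv : 2 * tvDist η₁ η₂ = ∑ d, |η₁.real {d} - η₂.real {d}| := by
    rw [tvDist]
    ring_nf
    rfl
  rw [htv, dist_pi_le_iff (Finset.sum_nonneg fun _ _ => abs_nonneg _)]
  exact fun d => (Real.dist_eq _ _).trans_le (hsum d)

theorem exists_abs_shannonEntropy_sub_lt {ε : ℝ} (hε : 0 < ε) :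
    ∃ δ > 0, ∀ (η₁ η₂ : Measure D) [IsProbabilityMeasure η₁] [IsProbabilityMeasure η₂],
      tvDist η₁ η₂ < δ → |shannonEntropy η₁ - shannonEntropy η₂| < ε := by
  set H : (D → ℝ) → ℝ := fun p => ∑ d, Real.negMulLog (p d)
  have hH : Continuous H := by fun_prop
  obtain ⟨δ, hδ, hunif⟩ := Metric.uniformContinuousOn_iff.mp
    ((isCompact_Icc (a := (0 : D → ℝ)) (b := 1)).uniformContinuousOn_of_continuous
      hH.continuousOn) ε hε
  have hmem : ∀ (η : Measure D) [IsProbabilityMeasure η],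
      (fun d => η.real {d}) ∈ Set.Icc (0 : D → ℝ) 1 :=
    fun η _ => ⟨fun _ => measureReal_nonneg, fun _ => measureReal_le_one⟩
  refine ⟨δ / 2, half_pos hδ, fun η₁ η₂ _ _ htv => ?_⟩
  have h := hunif _ (hmem η₁) _ (hmem η₂)
    ((dist_measureReal_singleton_le_two_mul_tvDist η₁ η₂).trans_lt (by linarith))
  rw [Real.dist_eq] at h
  rwa [shannonEntropy_eq_sum_negMulLog, shannonEntropy_eq_sum_negMulLog]

variable [MeasurableSingletonClass D] [MeasurableSingletonClass E] [MeasurableSingletonClass E']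

theorem tvDist_map_le (u : D → E) (η₁ η₂ : Measure D) [IsFiniteMeasure η₁] [IsFiniteMeasure η₂] :
    tvDist (η₁.map u) (η₂.map u) ≤ tvDist η₁ η₂ := by
  classical
  unfold tvDist
  gcongr
  calc ∑ e, |(η₁.map u).real {e} - (η₂.map u).real {e}|
      = ∑ e, |∑ d with u d = e, (η₁.real {d} - η₂.real {d})| := by
        simp only [measureReal_map_singleton, Finset.sum_sub_distrib]
    _ ≤ ∑ e, ∑ d with u d = e, |η₁.real {d} - η₂.real {d}| :=
        Finset.sum_le_sum fun e _ => Finset.abs_sum_le_sum_abs _ _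
    _ = ∑ d, |η₁.real {d} - η₂.real {d}| := Finset.sum_fiberwise _ u _

theorem exists_condEntropyObs_lt_add_of_tvDist_lt (α : D → E) (β : D → E') {ε : ℝ} (hε : 0 < ε) :
    ∃ δ > 0, ∀ (η₁ η₂ : Measure D) [IsProbabilityMeasure η₁] [IsProbabilityMeasure η₂],
      tvDist η₁ η₂ < δ → condEntropyObs η₁ α β < condEntropyObs η₂ α β + ε := by
  obtain ⟨δ₁, hδ₁, h₁⟩ := exists_abs_shannonEntropy_sub_lt (D := E × E') (half_pos hε)
  obtain ⟨δ₂, hδ₂, h₂⟩ := exists_abs_shannonEntropy_sub_lt (D := E') (half_pos hε)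
  refine ⟨min δ₁ δ₂, lt_min hδ₁ hδ₂, fun η₁ η₂ _ _ htv => ?_⟩
  have := Measure.isProbabilityMeasure_map (measurable_of_finite β).aemeasurable (μ := η₁)
  have := Measure.isProbabilityMeasure_map (measurable_of_finite β).aemeasurable (μ := η₂)
  have := Measure.isProbabilityMeasure_map
    (measurable_of_finite fun d => (α d, β d)).aemeasurable (μ := η₁)
  have := Measure.isProbabilityMeasure_map
    (measurable_of_finite fun d => (α d, β d)).aemeasurable (μ := η₂)
  have hpair := abs_lt.mp <| h₁ (η₁.map fun d => (α d, β d)) (η₂.map fun d => (α d, β d))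
    ((tvDist_map_le _ η₁ η₂).trans_lt (htv.trans_le (min_le_left _ _)))
  have hβ := abs_lt.mp <| h₂ (η₁.map β) (η₂.map β)
    ((tvDist_map_le _ η₁ η₂).trans_lt (htv.trans_le (min_le_right _ _)))
  simp only [condEntropyObs, obsEntropy]
  linarith [hpair.1, hpair.2, hβ.1, hβ.2]

end Continuity

theorem Finset.sum_le_card_mul_add_card_filter_not_mul {ι : Type*} (s : Finset ι) (p : ι → Prop)
    [DecidablePred p] {t : ι → ℝ} {a M : ℝ} (ha : 0 ≤ a) (hgood : ∀ i ∈ s, p i → t i ≤ a)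
    (hM : ∀ i ∈ s, t i ≤ M) :
    ∑ i ∈ s, t i ≤ #s * a + #{i ∈ s | ¬p i} * M := by
  rw [← Finset.sum_filter_add_sum_filter_not s p]
  have hgood' := Finset.sum_le_card_nsmul {i ∈ s | p i} t a fun i hi =>
    hgood i (Finset.mem_filter.mp hi).1 (Finset.mem_filter.mp hi).2
  have hbad := Finset.sum_le_card_nsmul {i ∈ s | ¬p i} t M fun i hi =>
    hM i (Finset.mem_filter.mp hi).1
  have hcard : (#{i ∈ s | p i} : ℝ) ≤ #s := by exact_mod_cast Finset.card_filter_le s p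
  rw [nsmul_eq_mul] at hgood' hbad
  nlinarith

theorem card_filter_not_le_of_le_natCard {V : Type*} [Fintype V] (S : Finset V) (P : V → Prop)
    [DecidablePred P] {δ : ℝ} (h : (1 - δ) * Fintype.card V ≤ Nat.card {v // P v}) :
    (#{v ∈ S | ¬P v} : ℝ) ≤ δ * Fintype.card V := by
  have hsub : (#{v ∈ S | ¬P v} : ℝ) ≤ #{v | ¬P v} := by
    exact_mod_cast Finset.card_le_card (Finset.filter_subset_filter _ (Finset.subset_univ _))
  have hsplit : (#{v | P v} : ℝ) + #{v | ¬P v} = Fintype.card V := by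
    exact_mod_cast Finset.card_filter_add_card_filter_not P
  rw [Nat.card_eq_fintype_card, Fintype.card_subtype] at h
  linarith

/-- The paper's `Π^σ_{v,F}`. -/
def localPattern {G V A : Type*} (σ : G → Equiv.Perm V) (F : Finset G) (v : V) (x : V → A) :
    F → A :=
  fun g => x (σ g v)

theorem eventually_obsEntropy_le_add_card_mul {G : Type*} [Group G] [DecidableEq G]
    {V : ℕ → Type*} [∀ n, Fintype (V n)] [∀ n, DecidableEq (V n)] {A B : Type*} [Fintype A]
    [MeasurableSpace A] [MeasurableSingletonClass A] [Fintype B] [MeasurableSpace B]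
    [MeasurableSingletonClass B]
    (σ : ∀ n, G → Equiv.Perm (V n)) (μ : Measure (G → A)) [IsProbabilityMeasure μ]
    (μn : ∀ n, Measure (V n → A)) (hμn : ∀ n, IsProbabilityMeasure (μn n))
    (hconv : LocalWeakStarConverges σ μn μ) (F : Finset G) (θ κ : (F → A) → B) {c : ℝ}
    (hc : 0 < c) (S : ∀ n, Finset (V n)) (hS : ∀ n, c * Fintype.card (V n) ≤ #(S n))
    {ε : ℝ} (hε : 0 < ε) :
    ∀ᶠ n in atTop,
      obsEntropy (μn n) (fun x (s : S n) => θ (localPattern (σ n) F s x)) ≤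
        obsEntropy (μn n) (fun x (s : S n) => κ (localPattern (σ n) F s x)) +
          #(S n) * (condEntropyObs μ (θ ∘ F.restrict) (κ ∘ F.restrict) + ε) := by
  classical
  have hrestrict : Measurable (F.restrict : (G → A) → F → A) := Finset.measurable_restrict F
  set C := condEntropyObs μ (θ ∘ F.restrict) (κ ∘ F.restrict)
  have hC : condEntropyObs (μ.map F.restrict) θ κ = C := condEntropyObs_map μ hrestrict θ κ
  have hC0 : 0 ≤ C := condEntropyObs_nonneg μ (measurable_of_finite θ |>.comp hrestrict)
    (measurable_of_finite κ |>.comp hrestrict)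
  set M := Real.log (Fintype.card (B × B))
  have hM : 0 ≤ M := Real.log_natCast_nonneg _
  obtain ⟨δ₀, hδ₀, hcont⟩ := exists_condEntropyObs_lt_add_of_tvDist_lt θ κ (half_pos hε)
  set δ := min δ₀ (ε * c / (2 * (M + 1)))
  have hδM : δ * M ≤ ε * c / 2 := by
    calc δ * M ≤ ε * c / (2 * (M + 1)) * M := mul_le_mul_of_nonneg_right (min_le_right _ _) hM
      _ ≤ ε * c / 2 := by
        rw [div_mul_eq_mul_div, div_le_div_iff₀ (by positivity) two_pos]
        nlinarith [mul_pos hε hc]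
  filter_upwards [hconv F δ (lt_min hδ₀ (by positivity))] with n hn
  have := hμn n
  set P : V n → Prop := fun v =>
    tvDist ((μn n).map (localPattern (σ n) F v)) (μ.map F.restrict) < δ
  set t : V n → ℝ := fun v =>
    condEntropyObs (μn n) (θ ∘ localPattern (σ n) F v) (κ ∘ localPattern (σ n) F v)
  have hgood : ∀ v ∈ S n, P v → t v ≤ C + ε / 2 := fun v _ hv => by
    have := Measure.isProbabilityMeasure_map
      (measurable_of_finite (localPattern (σ n) F v)).aemeasurable (μ := μn n)
    have := Measure.isProbabilityMeasure_map hrestrict.aemeasurable (μ := μ)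
    have h := hcont _ _ (hv.trans_le (min_le_left _ _))
    rw [condEntropyObs_map _ (measurable_of_finite _), hC] at h
    exact h.le
  have hall : ∀ v ∈ S n, t v ≤ M := fun v _ =>
    condEntropyObs_le_log_card _ (measurable_of_finite _) (measurable_of_finite _)
  have hbad := card_filter_not_le_of_le_natCard (S n) P hn
  have hsum := Finset.sum_le_card_mul_add_card_filter_not_mul (S n) P (by positivity) hgood hall
  have hchain := obsEntropy_pi_le_add_sum_condEntropyObs (μn n)
    (f := fun v => θ ∘ localPattern (σ n) F v) (k := fun v => κ ∘ localPattern (σ n) F v)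
    (fun _ => measurable_of_finite _) (fun _ => measurable_of_finite _) (S n)
  have hbadM : (#{v ∈ S n | ¬P v} : ℝ) * M ≤ ε / 2 * #(S n) := by
    calc (#{v ∈ S n | ¬P v} : ℝ) * M ≤ δ * M * Fintype.card (V n) := by nlinarith
      _ ≤ ε * c / 2 * Fintype.card (V n) := by gcongr
      _ ≤ ε / 2 * #(S n) := by nlinarith [hS n]
  have htotal : ∑ v ∈ S n, t v ≤ #(S n) * (C + ε) := by linarith
  exact hchain.trans (add_le_add_right htotal _)

theorem stmt7_general {G : Type*} [Group G] [DecidableEq G]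
    (V : ℕ → Type*) [∀ n, Fintype (V n)] [∀ n, DecidableEq (V n)]
    (σ : ∀ n, G → Equiv.Perm (V n))
    (A B : Type*) [Fintype A] [MeasurableSpace A] [DiscreteMeasurableSpace A]
    [Fintype B] [MeasurableSpace B] [DiscreteMeasurableSpace B]
    (μ : Measure (G → A)) [IsProbabilityMeasure μ]
    (μn : ∀ n, Measure (V n → A)) (hμn : ∀ n, IsProbabilityMeasure (μn n))
    (hconv : LocalWeakStarConverges σ μn μ)
    (F : Finset G) (θ κ : (↥F → A) → B)
    -- `φ = θ ∘ π_F` and `ψ = κ ∘ π_F` are the corresponding `F`-local observables.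
    (c : ℝ) (hc : 0 < c)
    (S : ∀ n, Finset (V n)) (hS : ∀ n, c * (Fintype.card (V n) : ℝ) ≤ ((S n).card : ℝ)) :
    ∀ ε : ℝ, 0 < ε → ∀ᶠ n in atTop,
      (1 / ((S n).card : ℝ)) *
          |shannonEntropy (Measure.map (fun (b : V n → B) (s : ↥(S n)) => b s.1)
              (Measure.map (fun (x : V n → A) (v : V n) => θ (fun g : ↥F => x (σ n g.1 v)))
                (μn n))) -
            shannonEntropy (Measure.map (fun (b : V n → B) (s : ↥(S n)) => b s.1)
              (Measure.map (fun (x : V n → A) (v : V n) => κ (fun g : ↥F => x (σ n g.1 v)))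
                (μn n)))| ≤
        rokDist μ (fun a => θ (fun g : ↥F => a g.1)) (fun a => κ (fun g : ↥F => a g.1)) + ε := by
  intro ε hε
  filter_upwards [eventually_obsEntropy_le_add_card_mul σ μ μn hμn hconv F θ κ hc S hS hε,
    eventually_obsEntropy_le_add_card_mul σ μ μn hμn hconv F κ θ hc S hS hε] with n hθκ hκθ
  have hentropy : ∀ τ : (F → A) → B,
      shannonEntropy (Measure.map (fun (b : V n → B) (s : ↥(S n)) => b s.1)
        (Measure.map (fun (x : V n → A) (v : V n) => τ (fun g : ↥F => x (σ n g.1 v))) (μn n))) =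
      obsEntropy (μn n) (fun x (s : S n) => τ (localPattern (σ n) F s x)) := fun τ => by
    rw [Measure.map_map (measurable_of_finite _) (measurable_of_finite _)]
    rfl
  have hrestrict : Measurable (F.restrict : (G → A) → F → A) := Finset.measurable_restrict F
  have hθ := condEntropyObs_nonneg μ (measurable_of_finite θ |>.comp hrestrict)
    (measurable_of_finite κ |>.comp hrestrict)
  have hκ := condEntropyObs_nonneg μ (measurable_of_finite κ |>.comp hrestrict)
    (measurable_of_finite θ |>.comp hrestrict)
  change _ ≤ condEntropyObs μ (θ ∘ F.restrict) (κ ∘ F.restrict) +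
    condEntropyObs μ (κ ∘ F.restrict) (θ ∘ F.restrict) + ε
  rw [hentropy, hentropy, one_div_mul_eq_div]
  refine div_le_of_le_mul₀ (Nat.cast_nonneg _) (by positivity) (abs_sub_le_iff.mpr ⟨?_, ?_⟩)
    <;> nlinarith [Nat.cast_nonneg (α := ℝ) #(S n)]

theorem stmt7 {G : Type*} [Group G] [Countable G] [DecidableEq G]
    (V : ℕ → Type*) [∀ n, Fintype (V n)] [∀ n, DecidableEq (V n)]
    (σ : ∀ n, G → Equiv.Perm (V n)) (hσ : IsSoficApprox σ)
    (A B : Type*) [Fintype A] [MeasurableSpace A] [DiscreteMeasurableSpace A]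
    [Fintype B] [MeasurableSpace B] [DiscreteMeasurableSpace B]
    (μ : Measure (G → A)) [IsProbabilityMeasure μ]
    (hinv : ∀ g : G, Measure.map (fun (a : G → A) (k : G) => a (k * g)) μ = μ)
    (μn : ∀ n, Measure (V n → A)) (hμn : ∀ n, IsProbabilityMeasure (μn n))
    (hconv : LocalWeakStarConverges σ μn μ)
    (F : Finset G) (θ κ : (↥F → A) → B)
    -- `φ = θ ∘ π_F` and `ψ = κ ∘ π_F` are the corresponding `F`-local observables.
    (c : ℝ) (hc : 0 < c)
    (S : ∀ n, Finset (V n)) (hS : ∀ n, c * (Fintype.card (V n) : ℝ) ≤ ((S n).card : ℝ)) :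
    ∀ ε : ℝ, 0 < ε → ∀ᶠ n in atTop,
      (1 / ((S n).card : ℝ)) *
          |shannonEntropy (Measure.map (fun (b : V n → B) (s : ↥(S n)) => b s.1)
              (Measure.map (fun (x : V n → A) (v : V n) => θ (fun g : ↥F => x (σ n g.1 v)))
                (μn n))) -
            shannonEntropy (Measure.map (fun (b : V n → B) (s : ↥(S n)) => b s.1)
              (Measure.map (fun (x : V n → A) (v : V n) => κ (fun g : ↥F => x (σ n g.1 v)))
                (μn n)))| ≤
        rokDist μ (fun a => θ (fun g : ↥F => a g.1)) (fun a => κ (fun g : ↥F => a g.1)) + ε :=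
  stmt7_general V σ A B μ μn hμn hconv F θ κ c hc S hS
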